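/- Let Γ ≅ (ℤ/2ℤ) × (ℤ/2ℤ) with generators σ, τ, and let M = (ℤ/4ℤ)³ with Γ-action σ(a,b,c) = (b, a, −a−b−c) and τ(a,b,c) = (c, −a−b−c, a). Then H¹(Γ, M) ≅ ℤ/4ℤ. -/

import Mathlib

open CategoryTheory CategoryTheory.Limits groupCohomology

/-- A permutation `ℤΓ`-module: one isomorphic to `ℤ[X]` for some `Γ`-set `X`. -/
def IsPermutationModule {Γ : Type} [Group Γ] (F : Rep ℤ Γ) : Prop :=
  ∃ (X : Type) (_ : MulAction Γ X), Nonempty (F ≅ Rep.ofMulAction ℤ Γ X)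

/-- A permutation projective module: a direct summand of a permutation module. -/
def IsPermutationProjective {Γ : Type} [Group Γ] (M : Rep ℤ Γ) : Prop :=
  ∃ F : Rep ℤ Γ, IsPermutationModule F ∧ ∃ (i : M ⟶ F) (r : F ⟶ M), i ≫ r = 𝟙 M

/-- A coflasque module: `ℤ`-free with vanishing `H¹(Γ', M)` for all subgroups `Γ' ≤ Γ`. -/
def IsCoflasque {Γ : Type} [Group Γ] (M : Rep.{0} ℤ Γ) : Prop :=
  (@Module.Free ℤ M.V _ _ M.hV2) ∧
    ∀ Γ' : Subgroup Γ,
      Subsingleton (H1 ((Rep.resFunctor Γ'.subtype).obj M))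

/-- A permutation presentation of `M`: an exact sequence `0 → F → F → M → 0`
with `F` a permutation module. -/
def HasPermutationPresentation {Γ : Type} [Group Γ] (M : Rep ℤ Γ) : Prop :=
  ∃ (F : Rep ℤ Γ) (_ : IsPermutationModule F) (f : F ⟶ F) (π : F ⟶ M),
    Function.Injective f.hom ∧ Function.Surjective π.hom ∧ Function.Exact f.hom π.hom

/-- `π` is `H⁰`-surjective if it is surjective on `Γ'`-invariants for every subgroup `Γ'`. -/
def IsH0Surjective {Γ : Type} [Group Γ] {M N : Rep.{0} ℤ Γ} (π : M ⟶ N) : Prop :=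
  ∀ Γ' : Subgroup Γ, ∀ n : N, (∀ γ : Γ', N.ρ ↑γ n = n) →
    ∃ m : M, (∀ γ : Γ', M.ρ ↑γ m = m) ∧ π.hom m = n

/-!
A 1-cocycle `f` on `Γ = ⟨σ, τ⟩` is determined by `x = f σ` and `y = f τ`, and a pair `(x, y)`
comes from a cocycle exactly when it satisfies the relations `σ² = τ² = 1`, `τσ = στ` in the form
`σx + x = 0`, `τy + y = 0`, `σy + x = τx + y`; the cocycle is a coboundary iff
`(x, y) = (σm - m, τm - m)` for some `m`. For `M = (ℤ/4)³` the functional `2x₁ + y₁ + y₂`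
takes the value `-4m₁ = 0` on the coboundary of `m`, and conversely, when it vanishes,
`m = (0, x₁, y₁)` is a primitive. The cocycle with `x = (3, 1, 0)`, `y = (3, 0, 1)` has value `1`,
so the functional identifies `H¹(Γ, M)` with `ℤ/4`.
-/

namespace groupCohomology

variable {k G : Type} [CommRing k] [Group G] {A : Rep k G} {B : Type} [AddCommGroup B] [Module k B]

noncomputable def H1LinearEquivOfSurjective (φ : cocycles₁ A →ₗ[k] B) (hφ : Function.Surjective φ)
    (hker : ∀ f, φ f = 0 ↔ ⇑f ∈ coboundaries₁ A) : H1 A ≃ₗ[k] B :=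
  have hπ : Function.Surjective (H1π A).hom := (ModuleCat.epi_iff_surjective _).1 inferInstance
  have hπφ : LinearMap.ker (H1π A).hom = LinearMap.ker φ := by
    ext f
    exact (H1π_eq_zero_iff f).trans (hker f).symm
  (LinearMap.quotKerEquivOfSurjective _ hπ).symm ≪≫ₗ Submodule.quotEquivOfEq _ _ hπφ ≪≫ₗ
    LinearMap.quotKerEquivOfSurjective φ hφ

end groupCohomology

namespace KleinFour

abbrev V := Multiplicative (ZMod 2) × Multiplicative (ZMod 2)

def σ : V := (Multiplicative.ofAdd 1, 1)

def τ : V := (1, Multiplicative.ofAdd 1)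

lemma eq_one_or_σ_or_τ_or_σ_mul_τ : ∀ g : V, g = 1 ∨ g = σ ∨ g = τ ∨ g = σ * τ := by decide

lemma σ_mul_σ : σ * σ = 1 := by decide

lemma τ_mul_τ : τ * τ = 1 := by decide

lemma τ_mul_σ : τ * σ = σ * τ := by decide

section Cocycles

variable {k : Type} [CommRing k] {A : Rep k V}

lemma cocycles₁_ext {f₁ f₂ : cocycles₁ A} (hσ : f₁ σ = f₂ σ) (hτ : f₁ τ = f₂ τ) : f₁ = f₂ := by
  refine groupCohomology.cocycles₁_ext fun g => ?_
  rcases eq_one_or_σ_or_τ_or_σ_mul_τ g with rfl | rfl | rfl | rfl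
  · simp
  · exact hσ
  · exact hτ
  · rw [(mem_cocycles₁_iff f₁).1 f₁.2, (mem_cocycles₁_iff f₂).1 f₂.2, hσ, hτ]

lemma mem_coboundaries₁_iff (f : cocycles₁ A) :
    ⇑f ∈ coboundaries₁ A ↔ ∃ m : A, A.ρ σ m - m = f σ ∧ A.ρ τ m - m = f τ := by
  constructor
  · rintro ⟨m, hm⟩
    exact ⟨m, congrFun hm σ, congrFun hm τ⟩
  · rintro ⟨m, hmσ, hmτ⟩
    have : (⟨_, d₀₁_apply_mem_cocycles₁ m⟩ : cocycles₁ A) = f := cocycles₁_ext hmσ hmτ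
    exact ⟨m, congrArg Subtype.val this⟩

def CocycleRelations (x y : A) : Prop :=
  A.ρ σ x + x = 0 ∧ A.ρ τ y + y = 0 ∧ A.ρ σ y + x = A.ρ τ x + y

lemma cocycleRelations_of_cocycle (f : cocycles₁ A) : CocycleRelations (f σ) (f τ) := by
  have hf := (mem_cocycles₁_iff f).1 f.2
  refine ⟨?_, ?_, ?_⟩
  · rw [← hf, σ_mul_σ, cocycles₁_map_one]
  · rw [← hf, τ_mul_τ, cocycles₁_map_one]
  · rw [← hf, ← hf, τ_mul_σ]

lemma exists_cocycle_of_cocycleRelations {x y : A} (h : CocycleRelations x y) :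
    ∃ f : cocycles₁ A, f σ = x ∧ f τ = y := by
  obtain ⟨hx, hy, hxy⟩ := h
  have hρσ : ∀ v, A.ρ σ (A.ρ σ v) = v := fun v => by
    rw [← Module.End.mul_apply, ← map_mul, σ_mul_σ, map_one, Module.End.one_apply]
  have hρτσ : ∀ v, A.ρ τ (A.ρ σ v) = A.ρ σ (A.ρ τ v) := fun v => by
    rw [← Module.End.mul_apply, ← map_mul, τ_mul_σ, map_mul, Module.End.mul_apply]
  have hx' : A.ρ σ x = -x := eq_neg_of_add_eq_zero_left hx
  have hy' : A.ρ τ y = -y := eq_neg_of_add_eq_zero_left hy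
  have hxy' : A.ρ τ x = A.ρ σ y + x - y := eq_sub_of_add_eq hxy.symm
  let f : V → A := fun g =>
    if g = σ then x else if g = τ then y else if g = σ * τ then A.ρ σ y + x else 0
  refine ⟨⟨f, (mem_cocycles₁_iff f).2 fun g h => ?_⟩, by simp [f], by simp +decide [f]⟩
  rcases eq_one_or_σ_or_τ_or_σ_mul_τ g with rfl | rfl | rfl | rfl <;>
    rcases eq_one_or_σ_or_τ_or_σ_mul_τ h with rfl | rfl | rfl | rfl <;>
    simp +decide [f, hρσ, hρτσ, hx', hy', hxy'] <;> abel

end Cocycles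

section ZMod4Cubed

abbrev M := ZMod 4 × ZMod 4 × ZMod 4

variable (ρ : Representation ℤ V M)

lemma exists_coboundary_iff
    (hσ : ∀ a b c : ZMod 4, ρ σ (a, b, c) = (b, a, -a - b - c))
    (hτ : ∀ a b c : ZMod 4, ρ τ (a, b, c) = (c, -a - b - c, a))
    {x y : M} (h : CocycleRelations (A := Rep.of ρ) x y) :
    (∃ m : M, ρ σ m - m = x ∧ ρ τ m - m = y) ↔ 2 * x.1 + y.1 + y.2.1 = 0 := by
  obtain ⟨x₁, x₂, x₃⟩ := x
  obtain ⟨y₁, y₂, y₃⟩ := y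
  obtain ⟨hx, hy, hxy⟩ := h
  simp only [hσ, hτ, Prod.mk_add_mk, Prod.ext_iff, Prod.fst_zero, Prod.snd_zero] at hx hy hxy
  have h4 : (4 : ZMod 4) = 0 := by decide
  constructor
  · rintro ⟨⟨m₁, m₂, m₃⟩, hmσ, hmτ⟩
    simp only [hσ, hτ, Prod.mk_sub_mk, Prod.ext_iff] at hmσ hmτ
    linear_combination -(2 * hmσ.1 + hmτ.1 + hmτ.2.1) - m₁ * h4
  · intro hφ
    refine ⟨(0, x₁, y₁), ?_, ?_⟩ <;> simp only [hσ, hτ, Prod.mk_sub_mk, Prod.ext_iff]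
    · exact ⟨by ring, by linear_combination -hx.1, by linear_combination hxy.1 - hφ⟩
    · exact ⟨by ring, by linear_combination -hφ, by linear_combination -hy.1⟩

def obstruction : cocycles₁ (Rep.of ρ) →+ ZMod 4 :=
  AddMonoidHom.mk' (fun f => 2 * (f σ).1 + (f τ).1 + (f τ).2.1) fun f g => by
    change 2 * (f σ + g σ).1 + (f τ + g τ).1 + (f τ + g τ).2.1 = _
    simp only [Prod.fst_add, Prod.snd_add]
    ring

lemma obstruction_eq_zero_iff
    (hσ : ∀ a b c : ZMod 4, ρ σ (a, b, c) = (b, a, -a - b - c))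
    (hτ : ∀ a b c : ZMod 4, ρ τ (a, b, c) = (c, -a - b - c, a)) (f : cocycles₁ (Rep.of ρ)) :
    obstruction ρ f = 0 ↔ ⇑f ∈ coboundaries₁ (Rep.of ρ) :=
  ((mem_coboundaries₁_iff f).trans
    (exists_coboundary_iff ρ hσ hτ (cocycleRelations_of_cocycle f))).symm

lemma obstruction_surjective
    (hσ : ∀ a b c : ZMod 4, ρ σ (a, b, c) = (b, a, -a - b - c))
    (hτ : ∀ a b c : ZMod 4, ρ τ (a, b, c) = (c, -a - b - c, a)) :
    Function.Surjective (obstruction ρ) := by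
  have hrel : CocycleRelations (A := Rep.of ρ) (3, 1, 0) (3, 0, 1) := by
    simp only [CocycleRelations, hσ, hτ]
    exact ⟨rfl, rfl, rfl⟩
  obtain ⟨f, hfσ, hfτ⟩ := exists_cocycle_of_cocycleRelations hrel
  have hf : obstruction ρ f = 1 := by
    change 2 * (f σ).1 + (f τ).1 + (f τ).2.1 = 1
    rw [hfσ, hfτ]
    decide
  intro z
  exact ⟨z.val • f, by rw [map_nsmul, hf, nsmul_one, ZMod.natCast_zmod_val]⟩

end ZMod4Cubed

end KleinFour

theorem h1_klein_four_on_zmod4_cubed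
    (ρ : Representation ℤ (Multiplicative (ZMod 2) × Multiplicative (ZMod 2))
      (ZMod 4 × ZMod 4 × ZMod 4))
    (hσ : ∀ a b c : ZMod 4,
      ρ (Multiplicative.ofAdd 1, 1) (a, b, c) = (b, a, -a - b - c))
    (hτ : ∀ a b c : ZMod 4,
      ρ (1, Multiplicative.ofAdd 1) (a, b, c) = (c, -a - b - c, a)) :
    Nonempty (H1 (Rep.of ρ) ≃+ ZMod 4) :=
  ⟨(H1LinearEquivOfSurjective (KleinFour.obstruction ρ).toIntLinearMap
    (KleinFour.obstruction_surjective ρ hσ hτ) (KleinFour.obstruction_eq_zero_iff ρ hσ hτ)).toAddEquiv⟩
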